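/- Let q ≥ 1, let ξ ∈ L¹(ℝ^q) be measurable, let n ≥ 1 be a natural number, and let (Ω, 𝒞, ℙ) be a probability space with a jointly measurable noise ε : Ω × ℝ^q → ℝ whose realizations ε_ω lie in L¹(ℝ^q) and for which ω ↦ ‖ε_ω‖_{L¹(ℝ^q)} is integrable. Then E[‖S_n(ε_ω)‖_{L¹(ℝ^q)}] ≤ ‖ξ‖_{L¹(ℝ^q)} E[‖ε_ω‖_{L¹(ℝ^q)}], where the constant ‖ξ‖_{L¹} is independent of both n and ω. -/

import Mathlib

/-!
Each kernel term `x ↦ ξ (n x - k)` has `L¹` norm `n^(-q) ‖ξ‖₁` (a dilation followed by a translation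
of Lebesgue measure), so by Tonelli `‖S_n f‖₁ ≤ ‖ξ‖₁ ∑ₖ ∫_{D_k^n} |f| = ‖ξ‖₁ ‖f‖₁`, the cells
tiling `ℝ^q`. Taking expectations of this pathwise bound gives the theorem.
-/

open MeasureTheory

/-- The cell `D_k^n = ∏_{j=1}^q [k_j/n, (k_j+1)/n)` of the uniform grid of step `1/n`. -/
def cell (q n : ℕ) (k : Fin q → ℤ) : Set (EuclideanSpace ℝ (Fin q)) :=
  (WithLp.ofLp : EuclideanSpace ℝ (Fin q) → Fin q → ℝ) ⁻¹'
    Set.univ.pi fun j => Set.Ico ((k j : ℝ) / n) (((k j : ℝ) + 1) / n)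

/-- The sampling Kantorovich operator
`S_n(f)(x) = n^q ∑_{k ∈ ℤ^q} ξ(n x − k) ∫_{D_k^n} f(u) du`. -/
noncomputable def SK (q : ℕ) (ξ : EuclideanSpace ℝ (Fin q) → ℝ) (n : ℕ)
    (f : EuclideanSpace ℝ (Fin q) → ℝ) (x : EuclideanSpace ℝ (Fin q)) : ℝ :=
  (n : ℝ) ^ q * ∑' k : Fin q → ℤ,
    ξ (WithLp.toLp 2 fun j => (n : ℝ) * x j - (k j : ℝ)) * ∫ u in cell q n k, f u

open scoped ENNReal

section Haar

variable {E : Type*} [NormedAddCommGroup E] [NormedSpace ℝ E] [MeasurableSpace E] [BorelSpace E]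
  [FiniteDimensional ℝ E] (μ : Measure E) [μ.IsAddHaarMeasure]

theorem lintegral_comp_smul_sub (g : E → ℝ≥0∞) {r : ℝ} (hr : r ≠ 0) (v : E) :
    ∫⁻ x, g (r • x - v) ∂μ = ENNReal.ofReal |(r ^ Module.finrank ℝ E)⁻¹| * ∫⁻ x, g x ∂μ :=
  calc ∫⁻ x, g (r • x - v) ∂μ = ∫⁻ y, g (y - v) ∂Measure.map (r • ·) μ :=
        (lintegral_map_equiv (fun y => g (y - v))
          (Homeomorph.smul (isUnit_iff_ne_zero.2 hr).unit).toMeasurableEquiv).symm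
    _ = _ := by
      rw [Measure.map_addHaar_smul μ hr, lintegral_smul_measure, smul_eq_mul,
        lintegral_sub_right_eq_self g v]

theorem quasiMeasurePreserving_smul_sub {r : ℝ} (hr : r ≠ 0) (v : E) :
    Measure.QuasiMeasurePreserving (fun x => r • x - v) μ μ :=
  (measurePreserving_sub_right μ v).quasiMeasurePreserving.comp
    (Measure.quasiMeasurePreserving_smul μ hr)

end Haar

theorem EuclideanSpace.toLp_mul_sub {ι : Type*} (c : ℝ) (x : EuclideanSpace ℝ ι) (y : ι → ℝ) :
    (WithLp.toLp 2 fun j => c * x j - y j) = c • x - WithLp.toLp 2 y := by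
  ext j
  simp

variable {q n : ℕ}

theorem mem_cell_iff (hn : 0 < n) {k : Fin q → ℤ} {x : EuclideanSpace ℝ (Fin q)} :
    x ∈ cell q n k ↔ ∀ j, ⌊(n : ℝ) * x j⌋ = k j := by
  have hn' : (0 : ℝ) < n := Nat.cast_pos.mpr hn
  simp only [cell, Set.mem_preimage, Set.mem_univ_pi, Set.mem_Ico, Int.floor_eq_iff,
    div_le_iff₀ hn', lt_div_iff₀ hn', mul_comm (n : ℝ)]

theorem measurableSet_cell (k : Fin q → ℤ) : MeasurableSet (cell q n k) :=
  (MeasurableSet.univ_pi fun _ => measurableSet_Ico).preimage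
    (WithLp.measurable_ofLp 2 (Fin q → ℝ))

theorem pairwise_disjoint_cell (hn : 0 < n) : Pairwise (Function.onFun Disjoint (cell q n)) := by
  intro k k' hne
  refine Set.disjoint_left.mpr fun x hx hx' => hne (funext fun j => ?_)
  rw [← (mem_cell_iff hn).mp hx j, ← (mem_cell_iff hn).mp hx' j]

theorem iUnion_cell (hn : 0 < n) : (⋃ k : Fin q → ℤ, cell q n k) = Set.univ :=
  Set.eq_univ_of_forall fun x =>
    Set.mem_iUnion.mpr ⟨fun j => ⌊(n : ℝ) * x j⌋, (mem_cell_iff hn).mpr fun _ => rfl⟩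

theorem tsum_setLIntegral_cell (hn : 0 < n) (g : EuclideanSpace ℝ (Fin q) → ℝ≥0∞) :
    ∑' k : Fin q → ℤ, ∫⁻ u in cell q n k, g u = ∫⁻ u, g u := by
  rw [← lintegral_iUnion measurableSet_cell (pairwise_disjoint_cell hn), iUnion_cell hn,
    Measure.restrict_univ]

variable {ξ : EuclideanSpace ℝ (Fin q) → ℝ}

theorem aemeasurable_enorm_comp_grid (hn : 0 < n) (hξ : AEStronglyMeasurable ξ)
    (k : Fin q → ℤ) :
    AEMeasurable fun x : EuclideanSpace ℝ (Fin q) =>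
      ‖ξ (WithLp.toLp 2 fun j => (n : ℝ) * x j - (k j : ℝ))‖ₑ := by
  simp_rw [EuclideanSpace.toLp_mul_sub]
  exact hξ.enorm.comp_quasiMeasurePreserving
    (quasiMeasurePreserving_smul_sub volume (Nat.cast_pos.mpr hn).ne' _)

theorem lintegral_enorm_comp_grid (hn : 0 < n) (k : Fin q → ℤ) :
    ∫⁻ x : EuclideanSpace ℝ (Fin q), ‖ξ (WithLp.toLp 2 fun j => (n : ℝ) * x j - (k j : ℝ))‖ₑ
      = ((n : ℝ≥0∞) ^ q)⁻¹ * ∫⁻ x, ‖ξ x‖ₑ := by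
  have hn' : (0 : ℝ) < n := Nat.cast_pos.mpr hn
  simp_rw [EuclideanSpace.toLp_mul_sub]
  rw [lintegral_comp_smul_sub volume (fun y => ‖ξ y‖ₑ) hn'.ne', finrank_euclideanSpace_fin,
    abs_of_pos (by positivity), ENNReal.ofReal_inv_of_pos (by positivity),
    ENNReal.ofReal_pow hn'.le, ENNReal.ofReal_natCast]

theorem enorm_SK_le (f : EuclideanSpace ℝ (Fin q) → ℝ) (x : EuclideanSpace ℝ (Fin q)) :
    ‖SK q ξ n f x‖ₑ ≤ (n : ℝ≥0∞) ^ q * ∑' k : Fin q → ℤ,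
      ‖ξ (WithLp.toLp 2 fun j => (n : ℝ) * x j - (k j : ℝ))‖ₑ * ∫⁻ u in cell q n k, ‖f u‖ₑ := by
  rw [SK, enorm_mul, enorm_pow, Real.enorm_natCast]
  gcongr
  refine enorm_tsum_le_tsum_enorm.trans (ENNReal.tsum_le_tsum fun k => ?_)
  rw [enorm_mul]
  gcongr
  exact enorm_integral_le_lintegral_enorm _

theorem lintegral_enorm_SK_le (hn : 0 < n) (hξ : AEStronglyMeasurable ξ)
    (f : EuclideanSpace ℝ (Fin q) → ℝ) :
    ∫⁻ x, ‖SK q ξ n f x‖ₑ ≤ (∫⁻ x, ‖ξ x‖ₑ) * ∫⁻ x, ‖f x‖ₑ := by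
  have hnq : (n : ℝ≥0∞) ^ q ≠ 0 := pow_ne_zero _ (Nat.cast_ne_zero.mpr hn.ne')
  calc ∫⁻ x, ‖SK q ξ n f x‖ₑ
      ≤ ∫⁻ x, (n : ℝ≥0∞) ^ q * ∑' k : Fin q → ℤ,
          ‖ξ (WithLp.toLp 2 fun j => (n : ℝ) * x j - (k j : ℝ))‖ₑ
            * ∫⁻ u in cell q n k, ‖f u‖ₑ := lintegral_mono (enorm_SK_le f)
    _ = (n : ℝ≥0∞) ^ q * ∑' k : Fin q → ℤ,
          (((n : ℝ≥0∞) ^ q)⁻¹ * ∫⁻ x, ‖ξ x‖ₑ) * ∫⁻ u in cell q n k, ‖f u‖ₑ := by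
        rw [lintegral_const_mul' _ _ (by simp),
          lintegral_tsum fun k => (aemeasurable_enorm_comp_grid hn hξ k).mul_const _]
        simp_rw [lintegral_mul_const'' _ (aemeasurable_enorm_comp_grid hn hξ _),
          lintegral_enorm_comp_grid hn]
    _ = (∫⁻ x, ‖ξ x‖ₑ) * ∫⁻ x, ‖f x‖ₑ := by
        rw [ENNReal.tsum_mul_left, tsum_setLIntegral_cell hn, ← mul_assoc, ← mul_assoc,
          ENNReal.mul_inv_cancel hnq (by simp), one_mul]

theorem integral_abs_SK_le (hn : 0 < n) (hξ : Integrable ξ)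
    {f : EuclideanSpace ℝ (Fin q) → ℝ} (hf : Integrable f) :
    ∫ x, |SK q ξ n f x| ≤ (∫ x, |ξ x|) * ∫ x, |f x| :=
  -- `S_n f` need not be integrable: then its integral is the junk value `0`.
  calc ∫ x, |SK q ξ n f x|
      ≤ (∫⁻ x, ENNReal.ofReal ‖|SK q ξ n f x|‖).toReal :=
        (Real.le_norm_self _).trans (norm_integral_le_lintegral_norm _)
    _ = (∫⁻ x, ‖SK q ξ n f x‖ₑ).toReal := by
        simp_rw [Real.norm_eq_abs, abs_abs, ← Real.norm_eq_abs, ofReal_norm]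
    _ ≤ ((∫⁻ x, ‖ξ x‖ₑ) * ∫⁻ x, ‖f x‖ₑ).toReal :=
        ENNReal.toReal_mono (ENNReal.mul_ne_top hξ.2.ne hf.2.ne)
          (lintegral_enorm_SK_le hn hξ.1 f)
    _ = (∫ x, |ξ x|) * ∫ x, |f x| := by
        rw [ENNReal.toReal_mul, ← integral_norm_eq_lintegral_enorm hξ.1,
          ← integral_norm_eq_lintegral_enorm hf.1]
        rfl

theorem SK_noise_expected_bound_general (q : ℕ)
    (ξ : EuclideanSpace ℝ (Fin q) → ℝ) (hξ : Integrable ξ)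
    (n : ℕ) (hn : 1 ≤ n)
    (Ω : Type*) [MeasureSpace Ω]
    (ε : Ω → EuclideanSpace ℝ (Fin q) → ℝ)
    (hεint : ∀ ω : Ω, Integrable (ε ω))
    (hεnorm : Integrable fun ω : Ω => ∫ x : EuclideanSpace ℝ (Fin q), |ε ω x|) :
    (∫ ω : Ω, ∫ x : EuclideanSpace ℝ (Fin q), |SK q ξ n (ε ω) x|)
      ≤ (∫ x : EuclideanSpace ℝ (Fin q), |ξ x|)
          * ∫ ω : Ω, ∫ x : EuclideanSpace ℝ (Fin q), |ε ω x| :=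
  calc (∫ ω : Ω, ∫ x, |SK q ξ n (ε ω) x|)
      ≤ ∫ ω : Ω, (∫ x, |ξ x|) * ∫ x, |ε ω x| :=
        integral_mono_of_nonneg (.of_forall fun _ => integral_nonneg fun _ => abs_nonneg _)
          (hεnorm.const_mul _) (.of_forall fun ω => integral_abs_SK_le hn hξ (hεint ω))
    _ = (∫ x, |ξ x|) * ∫ ω : Ω, ∫ x, |ε ω x| := integral_const_mul _ _

/-- the expected `L¹` norm of the SK operator applied to the noise satisfies
`E[‖S_n(ε_ω)‖₁] ≤ ‖ξ‖₁ E[‖ε_ω‖₁]`, with the constant `‖ξ‖₁` independent of `n` and `ω`. -/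
theorem SK_noise_expected_bound (q : ℕ) (hq : 1 ≤ q)
    (ξ : EuclideanSpace ℝ (Fin q) → ℝ) (hmeas : Measurable ξ) (hξ : Integrable ξ)
    (n : ℕ) (hn : 1 ≤ n)
    (Ω : Type*) [MeasureSpace Ω] [IsProbabilityMeasure (volume : Measure Ω)]
    (ε : Ω → EuclideanSpace ℝ (Fin q) → ℝ)
    (hεmeas : Measurable (Function.uncurry ε))
    (hεint : ∀ ω : Ω, Integrable (ε ω))
    (hεnorm : Integrable fun ω : Ω => ∫ x : EuclideanSpace ℝ (Fin q), |ε ω x|) :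
    (∫ ω : Ω, ∫ x : EuclideanSpace ℝ (Fin q), |SK q ξ n (ε ω) x|)
      ≤ (∫ x : EuclideanSpace ℝ (Fin q), |ξ x|)
          * ∫ ω : Ω, ∫ x : EuclideanSpace ℝ (Fin q), |ε ω x| :=
  SK_noise_expected_bound_general q ξ hξ n hn Ω ε hεint hεnorm
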